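/- Let w be an infinite non-ultimately periodic word, u ∈ Π_γ(w) primitive, h ≥ γ an integer, and φ ∈ Φ_h. Then for every word t ∈ PowFactor(u) of length |u|, the (h+2)-power t^{h+2} is not a factor of the reduced word reduce_{w,u,φ}. -/

import Mathlib

open scoped BigOperators

variable {α : Type*}

/-- The factor of the infinite word `w` (1-indexed) from position `i` to position `j`. -/
def Subword (w : ℕ → α) (i j : ℕ) : List α :=
  (List.range (j + 1 - i)).map fun n => w (i + n)

/-- `t` is a finite factor of the infinite word `w` (positions are 1-indexed). -/
def IsFactorI (w : ℕ → α) (t : List α) : Prop :=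
  ∃ i, 1 ≤ i ∧ t = (List.range t.length).map fun n => w (i + n)

/-- `t` occurs infinitely often in the infinite word `w`. -/
def RecurrentI (w : ℕ → α) (t : List α) : Prop :=
  ∀ N, ∃ i, N ≤ i ∧ t = (List.range t.length).map fun n => w (i + n)

/-- The infinite word `w` is ultimately periodic. -/
def UltimatelyPeriodic (w : ℕ → α) : Prop :=
  ∃ p N, 1 ≤ p ∧ ∀ n, N ≤ n → w (n + p) = w n

/-- The `q`-power `u^q` of a finite word `u`, for a rational exponent `q ≥ 1`:
`u^⌊q⌋` followed by the prefix of `u` of length `(q - ⌊q⌋)·|u|`. -/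
def fracPow (u : List α) (q : ℚ) : List α :=
  (List.replicate ⌊q⌋.toNat u).flatten ++
    u.take (⌊q * (u.length : ℚ)⌋.toNat - ⌊q⌋.toNat * u.length)

/-- A nonempty word is primitive if it is not a (possibly fractional) `q`-power,
`q ≥ 2`, of any word. -/
def Primitive (v : List α) : Prop :=
  v ≠ [] ∧ ∀ (t : List α) (q : ℚ), 2 ≤ q → v ≠ fracPow t q

/-- `PowFactor u`: finite factors of `u^∞` together with finite factors of `(u^R)^∞`. -/
def IsPowFactor (u t : List α) : Prop :=
  (∃ k, t <:+: (List.replicate k u).flatten) ∨ (∃ k, t <:+: (List.replicate k u.reverse).flatten)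

/-- `(i,j)` is a `u`-run of the infinite word `w` (with the fixed parameter `γ`). -/
def IsRun (γ : ℕ) (w : ℕ → α) (u : List α) (i j : ℕ) : Prop :=
  i < j ∧ (γ - 2) * u.length ≤ j - i + 1 ∧ u.length + 1 < i ∧
  IsPowFactor u (Subword w (i - u.length) (j + u.length)) ∧
  ¬ IsPowFactor u (Subword w (i - u.length - 1) (j + u.length)) ∧
  ¬ IsPowFactor u (Subword w (i - u.length) (j + u.length + 1))

/-- Membership in the set `Π_γ(w)`. -/
def InPi (γ : ℕ) (w : ℕ → α) (u : List α) : Prop :=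
  Primitive u ∧ IsFactorI w u ∧
  ¬ IsPowFactor u ((List.range (γ * u.length)).map fun n => w (1 + n)) ∧
  ∃ v : List α, v.length = u.length ∧ IsPowFactor u v ∧
    RecurrentI w ((List.replicate γ v).flatten)

/-- Palindromic length: the minimal number of nonempty palindromes whose
concatenation equals `v`. -/
noncomputable def PL (v : List α) : ℕ :=
  sInf {k | ∃ ps : List (List α), ps.flatten = v ∧ ps.length = k ∧
    ∀ p ∈ ps, p ≠ [] ∧ p.reverse = p}

/-- `maxPL v`: the maximum of `PL` over the factors of `v`. -/
noncomputable def maxPL (v : List α) : ℕ :=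
  sSup {n | ∃ t, t <:+: v ∧ n = PL t}

/-- `(I, J, W, Z, D)` is the run factorization `factrz(w,u)` of `w`:
`(I k, J k)` enumerates the `u`-runs in increasing order, `W k` is the inter-run
factor, and `w[I k, J k] = (Z k)^(D k)`. -/
structure IsFactrz (γ : ℕ) (w : ℕ → α) (u : List α)
    (I J : ℕ → ℕ) (W Z : ℕ → List α) (D : ℕ → ℚ) : Prop where
  run : ∀ k, 1 ≤ k → IsRun γ w u (I k) (J k)
  mono : ∀ k, 1 ≤ k → I k < I (k + 1)
  complete : ∀ i j, IsRun γ w u i j → ∃ k, 1 ≤ k ∧ I k = i ∧ J k = j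
  j0 : J 0 = 0
  wdef : ∀ k, 1 ≤ k → W k = Subword w (J (k - 1) + 1) (I k - 1)
  zlen : ∀ k, 1 ≤ k → (Z k).length = u.length
  zpow : ∀ k, 1 ≤ k → IsPowFactor u (Z k)
  dge : ∀ k, 1 ≤ k → 1 ≤ D k
  zd : ∀ k, 1 ≤ k → Subword w (I k) (J k) = fracPow (Z k) (D k)

/-- Membership in `Φ_h` (with fixed parameter `γ`). -/
def InPhi (γ h : ℕ) (φ : ℚ → ℚ) : Prop :=
  ∀ q : ℚ, 1 ≤ q → ((γ : ℚ) - 2 ≤ φ q ∧ φ q < (h : ℚ) ∧ ∃ n : ℕ, q - φ q = (n : ℚ))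

/-- The finite prefix `W 1 (Z 1)^(E 1) ⋯ W k (Z k)^(E k)` of the reduced word. -/
def redPrefix (W Z : ℕ → List α) (E : ℕ → ℚ) : ℕ → List α
  | 0 => []
  | k + 1 => redPrefix W Z E k ++ W (k + 1) ++ fracPow (Z (k + 1)) (E (k + 1))

/-- `x` is the reduced word `W 1 (Z 1)^(E 1) W 2 (Z 2)^(E 2) ⋯` (1-indexed). -/
def IsReduce (W Z : ℕ → List α) (E : ℕ → ℚ) (x : ℕ → α) : Prop :=
  ∀ k, redPrefix W Z E k = (List.range (redPrefix W Z E k).length).map fun n => x (1 + n)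

/-- Position `i` of `w` is not covered by any `u`-run. -/
def RpoDom (γ : ℕ) (w : ℕ → α) (u : List α) (i : ℕ) : Prop :=
  1 ≤ i ∧ ∀ a b, IsRun γ w u a b → ¬ (a ≤ i ∧ i ≤ b)

/-- `κ(j) = Σ_{i ≤ j} (|W i| + |(Z i)^(D i)|)`, the end position of the `j`-th run. -/
def kappa (W Z : ℕ → List α) (D : ℕ → ℚ) (j : ℕ) : ℕ :=
  ∑ i ∈ Finset.Icc 1 j, ((W i).length + (fracPow (Z i) (D i)).length)

/-- The graph of the position bijection `rpo`: position `i` of `w` (with exponent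
sequence `D`) corresponds to position `ib` of the reduced word (exponents `E`). -/
def RpoRel (W Z : ℕ → List α) (D E : ℕ → ℚ) (i ib : ℕ) : Prop :=
  ∃ j, kappa W Z D j < i ∧ i ≤ kappa W Z D (j + 1) ∧
    ib = kappa W Z E j + (i - kappa W Z D j)

/-- There are at most `N` `u`-runs entirely contained in `[a,b]`. -/
def RunCountLe (γ : ℕ) (w : ℕ → α) (u : List α) (a b N : ℕ) : Prop :=
  ∀ S : Finset (ℕ × ℕ), (∀ p ∈ S, IsRun γ w u p.1 p.2 ∧ a ≤ p.1 ∧ p.2 ≤ b) → S.card ≤ N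

/-- `(i,j)` is a standard palindrome of `w` with respect to `u`. -/
def IsStdPal (γ : ℕ) (w : ℕ → α) (u : List α) (i j : ℕ) : Prop :=
  i ≤ j ∧ RpoDom γ w u i ∧ RpoDom γ w u j ∧
  (Subword w (i - 1) (j + 1)).reverse = Subword w (i - 1) (j + 1) ∧
  (∀ m, i - 1 ≤ m → m ≤ min (i + u.length - 1) j → RpoDom γ w u m) ∧
  (∀ m, max (j + 1 - u.length) i ≤ m → m ≤ j + 1 → RpoDom γ w u m) ∧
  (∀ m, i ≤ m → m ≤ j → (RpoDom γ w u m ↔ RpoDom γ w u (i + j - m)))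

/-- `(m1,m2)` is a centered standard palindrome of `w[i,j]`. -/
def IsCnStdPal (γ : ℕ) (w : ℕ → α) (u : List α) (i j m1 m2 : ℕ) : Prop :=
  IsStdPal γ w u m1 m2 ∧ i ≤ m1 ∧ m2 ≤ j ∧ m1 - i = j - m2

/-!
A `u`-periodic factor of length `(h+2)|u|` of the reduced word is located relative to the
segments `W k (Z k)^(φ(D k))`, each of which is a factor of `w` (the reduced block is a prefix
of the run). If it crosses a segment boundary it contains one of the two windows of length
`|u|+1` flanking a run of `w`, which the maximality of runs forbids. Otherwise it lies in one
segment: either in its last `|u| + |(Z k)^(φ(D k))| < (h+2)|u|` letters, which is too short, or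
it starts at least `|u|` letters before the run, and then it is a `u`-periodic factor of `w` of
length beyond `γ|u|`. Such a factor extends to a maximal run (to the right because `w` is not
ultimately periodic, to the left because the prefix of length `γ|u|` is not `u`-periodic), and
this run would sit strictly between two consecutive runs of the factorization.
-/

section Subword

variable {w : ℕ → α}

theorem length_subword (w : ℕ → α) (a b : ℕ) : (Subword w a b).length = b + 1 - a := by
  simp [Subword]

theorem getElem?_subword (a b r : ℕ) :
    (Subword w a b)[r]? = if r < b + 1 - a then some (w (a + r)) else none := by
  split_ifs with h <;> simp [Subword, h]

theorem map_range_eq_subword {i : ℕ} (hi : 1 ≤ i) (n : ℕ) :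
    (List.range n).map (fun m => w (i + m)) = Subword w i (i + n - 1) := by
  simp only [Subword, show i + n - 1 + 1 - i = n by omega]

theorem subword_append_subword {a b c : ℕ} (hab : a ≤ b + 1) (hbc : b ≤ c) :
    Subword w a b ++ Subword w (b + 1) c = Subword w a c := by
  refine List.ext_getElem? fun r => ?_
  simp only [List.getElem?_append, length_subword, getElem?_subword]
  split_ifs <;> first | rfl | (congr 2; omega)

theorem subword_infix_subword {a b a' b' : ℕ} (ha : a ≤ a') (hb : b' ≤ b) :
    Subword w a' b' <:+: Subword w a b := by
  have h : Subword w a' b' = ((Subword w a b).drop (a' - a)).take (b' + 1 - a') := by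
    refine List.ext_getElem? fun r => ?_
    simp only [List.getElem?_take, List.getElem?_drop, getElem?_subword]
    split_ifs <;> first | rfl | (congr 2; omega)
  exact h ▸ ((List.take_prefix _ _).isInfix.trans (List.drop_suffix _ _).isInfix)

theorem subword_congr {x y : ℕ → α} {c d a b : ℕ}
    (h : ∀ r, a ≤ r → r ≤ b → x (c + r) = y (d + r)) :
    Subword x (c + a) (c + b) = Subword y (d + a) (d + b) := by
  simp only [Subword, show c + b + 1 - (c + a) = b + 1 - a by omega,
    show d + b + 1 - (d + a) = b + 1 - a by omega]
  exact List.map_congr_left fun r hr => by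
    rw [List.mem_range] at hr
    simpa only [Nat.add_assoc] using h (a + r) (by omega) (by omega)

end Subword

section PowFactor

variable {u s t y : List α}

theorem getElem?_flatten_replicate {k r : ℕ} (hr : r < k * y.length) :
    ((List.replicate k y).flatten)[r]? = y[r % y.length]? := by
  induction k generalizing r with
  | zero => simp at hr
  | succ k ih =>
    rw [List.replicate_succ, List.flatten_cons, List.getElem?_append]
    split_ifs with h
    · rw [Nat.mod_eq_of_lt h]
    · rw [ih (by rw [Nat.succ_mul] at hr; omega), ← Nat.mod_eq_sub_mod (by omega)]

theorem length_flatten_replicate (k : ℕ) (y : List α) :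
    ((List.replicate k y).flatten).length = k * y.length := by
  simp

theorem exists_infix_flatten_replicate_iff (hy : y ≠ []) :
    (∃ k, s <:+: (List.replicate k y).flatten) ↔
      ∃ o, ∀ r < s.length, s[r]? = y[(o + r) % y.length]? := by
  have hp : 0 < y.length := List.length_pos_iff.2 hy
  constructor
  · rintro ⟨k, l₁, l₂, hk⟩
    refine ⟨l₁.length, fun r hr => ?_⟩
    have hlen := congrArg List.length hk
    simp only [List.length_append, length_flatten_replicate] at hlen
    rw [← getElem?_flatten_replicate (k := k) (by omega), ← hk, List.append_assoc,
      List.getElem?_append_right (by omega), Nat.add_sub_cancel_left,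
      List.getElem?_append_left hr]
  · rintro ⟨o, ho⟩
    refine ⟨o + s.length + 1, ?_⟩
    have hs : s = (((List.replicate (o + s.length + 1) y).flatten).drop o).take s.length := by
      refine List.ext_getElem? fun r => ?_
      rw [List.getElem?_take, List.getElem?_drop]
      split_ifs with hr
      · rw [ho r hr, getElem?_flatten_replicate (by nlinarith)]
      · exact List.getElem?_eq_none (by omega)
    nth_rewrite 1 [hs]
    exact (List.take_prefix _ _).isInfix.trans (List.drop_suffix _ _).isInfix

theorem length_eq_of_eq_or_eq_reverse (hy : y = u ∨ y = u.reverse) :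
    y.length = u.length := by
  rcases hy with rfl | rfl <;> simp

theorem IsPowFactor.of_infix (hs : IsPowFactor u s) (h : t <:+: s) : IsPowFactor u t := by
  rcases hs with ⟨k, hk⟩ | ⟨k, hk⟩
  · exact Or.inl ⟨k, h.trans hk⟩
  · exact Or.inr ⟨k, h.trans hk⟩

theorem isPowFactor_iff (hu : u ≠ []) :
    IsPowFactor u s ↔ ∃ y, (y = u ∨ y = u.reverse) ∧
      ∃ o, ∀ r < s.length, s[r]? = y[(o + r) % y.length]? := by
  simp only [IsPowFactor, exists_infix_flatten_replicate_iff hu,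
    exists_infix_flatten_replicate_iff (List.reverse_ne_nil_iff.2 hu), or_and_right, exists_or,
    exists_eq_left]

theorem IsPowFactor.flatten_replicate (ht : IsPowFactor u t) (hlen : t.length = u.length)
    (hu : u ≠ []) (n : ℕ) : IsPowFactor u (List.replicate n t).flatten := by
  obtain ⟨y, hy, o, ho⟩ := (isPowFactor_iff hu).1 ht
  have hyt : y.length = t.length := (length_eq_of_eq_or_eq_reverse hy).trans hlen.symm
  refine (isPowFactor_iff hu).2 ⟨y, hy, o, fun r hr => ?_⟩
  have ht0 : 0 < t.length := hlen ▸ List.length_pos_iff.2 hu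
  rw [length_flatten_replicate] at hr
  rw [getElem?_flatten_replicate hr, ho _ (Nat.mod_lt _ ht0), hyt, Nat.add_mod_mod]

end PowFactor

section Cyclic

variable {w : ℕ → α} {u y y' : List α} {a b c d : ℕ}

def ReadsCyclically (w : ℕ → α) (y : List α) (a b : ℕ) : Prop :=
  ∃ o, ∀ n, a ≤ n → n ≤ b → y[(o + n) % y.length]? = some (w n)

theorem isPowFactor_subword_iff (hu : u ≠ []) :
    IsPowFactor u (Subword w a b) ↔ ∃ y, (y = u ∨ y = u.reverse) ∧ ReadsCyclically w y a b := by
  rw [isPowFactor_iff hu]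
  refine exists_congr fun y => and_congr_right fun hy => ?_
  have hp : 0 < y.length := length_eq_of_eq_or_eq_reverse hy ▸ List.length_pos_iff.2 hu
  simp only [length_subword, getElem?_subword]
  constructor
  · rintro ⟨o, ho⟩
    refine ⟨o + (y.length - 1) * a, fun n han hnb => ?_⟩
    have hshift : o + (y.length - 1) * a + n = o + (n - a) + y.length * a := by
      have : (y.length - 1) * a + a = y.length * a := by
        rw [Nat.sub_one_mul, Nat.sub_add_cancel (Nat.le_mul_of_pos_left a hp)]
      omega
    have := ho (n - a) (by omega)
    rw [if_pos (by omega), Nat.add_sub_cancel' han] at this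
    rw [hshift, Nat.add_mul_mod_self_left, ← this]
  · rintro ⟨o, ho⟩
    refine ⟨o + a, fun r hr => ?_⟩
    rw [if_pos hr, Nat.add_assoc, ho (a + r) (by omega) (by omega)]

theorem ReadsCyclically.periodic (h : ReadsCyclically w y a b) {n : ℕ} (ha : a ≤ n)
    (hb : n + y.length ≤ b) : w (n + y.length) = w n := by
  obtain ⟨o, ho⟩ := h
  have h₁ := ho n ha (by omega)
  have h₂ := ho (n + y.length) (by omega) hb
  rw [← Nat.add_assoc, Nat.add_mod_right, h₁] at h₂
  exact (Option.some_inj.1 h₂).symm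

theorem ReadsCyclically.extend (h₁ : ReadsCyclically w y a b) (h₂ : ReadsCyclically w y' c d)
    (hy : y'.length = y.length) (hac : a ≤ c) (hcb : c + y.length ≤ b + 1) :
    ReadsCyclically w y a d := by
  obtain ⟨o, ho⟩ := h₁
  obtain ⟨o', ho'⟩ := h₂
  refine ⟨o, fun n han hnd => ?_⟩
  rcases le_or_gt n b with hnb | hbn
  · exact ho n han hnb
  have hp : 0 < y.length := Nat.pos_of_ne_zero fun h0 => by
    simpa [List.length_eq_zero_iff.1 (hy.trans h0)] using ho' n (by omega) hnd
  -- `n` is transferred into the overlap `[c, c + |y|)`, where both readings are known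
  set m := c + (n - c) % y.length
  have hm : m < c + y.length := Nat.add_lt_add_left (Nat.mod_lt _ hp) c
  have hmn : m ≡ n [MOD y.length] := by
    simpa only [m, Nat.add_sub_cancel' (show c ≤ n by omega)] using
      ((Nat.mod_modEq (n - c) y.length).add_left c)
  calc y[(o + n) % y.length]? = y[(o + m) % y.length]? := by rw [hmn.add_left o]
    _ = y'[(o' + m) % y.length]? := by
        rw [ho m (by omega) (by omega), ← hy, ho' m (by omega) (by omega)]
    _ = some (w n) := by rw [hmn.add_left o', ← hy, ho' n (by omega) hnd]

end Cyclic

section Runs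

variable {γ : ℕ} {w : ℕ → α} {u : List α} {i j i' j' s e : ℕ}

theorem IsRun.not_isPowFactor_right (hr : IsRun γ w u i j) (hu : u ≠ []) :
    ¬ IsPowFactor u (Subword w (j + 1) (j + u.length + 1)) := by
  obtain ⟨hij, -, -, hrun, -, hright⟩ := hr
  intro hpf
  obtain ⟨y, hy, hry⟩ := (isPowFactor_subword_iff hu).1 hrun
  obtain ⟨y', hy', hry'⟩ := (isPowFactor_subword_iff hu).1 hpf
  have hlen := length_eq_of_eq_or_eq_reverse hy
  exact hright ((isPowFactor_subword_iff hu).2 ⟨y, hy, hry.extend hry'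
    (by rw [hlen, length_eq_of_eq_or_eq_reverse hy']) (by omega) (by omega)⟩)

theorem IsRun.not_isPowFactor_left (hr : IsRun γ w u i j) (hu : u ≠ []) :
    ¬ IsPowFactor u (Subword w (i - u.length - 1) (i - 1)) := by
  obtain ⟨-, -, hi, hrun, hleft, -⟩ := hr
  intro hpf
  obtain ⟨y, hy, hry⟩ := (isPowFactor_subword_iff hu).1 hpf
  obtain ⟨y', hy', hry'⟩ := (isPowFactor_subword_iff hu).1 hrun
  have hlen := length_eq_of_eq_or_eq_reverse hy
  exact hleft ((isPowFactor_subword_iff hu).2 ⟨y, hy, hry.extend hry'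
    (by rw [hlen, length_eq_of_eq_or_eq_reverse hy']) (by omega) (by omega)⟩)

theorem IsRun.add_le_of_lt (h₁ : IsRun γ w u i j) (h₂ : IsRun γ w u i' j') (hu : u ≠ [])
    (hii : i < i') : j + u.length + 2 ≤ i' := by
  by_contra! hi'
  rcases le_or_gt j' j with hjj | hjj
  · obtain ⟨-, -, hi, hrun₁, -, -⟩ := h₁
    obtain ⟨-, -, -, -, hleft₂, -⟩ := h₂
    exact hleft₂ (hrun₁.of_infix (subword_infix_subword (by omega) (by omega)))
  · obtain ⟨-, -, -, hrun₂, -, -⟩ := h₂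
    exact h₁.not_isPowFactor_right hu (hrun₂.of_infix (subword_infix_subword (by omega) (by omega)))

theorem exists_maximal_right (hw : ¬ UltimatelyPeriodic w) (hu : u ≠ [])
    (hpf : IsPowFactor u (Subword w s e)) :
    ∃ e', e ≤ e' ∧ IsPowFactor u (Subword w s e') ∧ ¬ IsPowFactor u (Subword w s (e' + 1)) := by
  by_contra! H
  have hall : ∀ d, IsPowFactor u (Subword w s (e + d)) := fun d => by
    induction d with
    | zero => exact hpf
    | succ d ih => exact H _ (Nat.le_add_right e d) ih
  refine hw ⟨u.length, s, List.length_pos_iff.2 hu, fun n hn => ?_⟩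
  obtain ⟨y, hy, hry⟩ := (isPowFactor_subword_iff hu).1 (hall (n + u.length))
  rw [← length_eq_of_eq_or_eq_reverse hy] at hry ⊢
  exact hry.periodic hn (by omega)

theorem exists_maximal_left (hpre : ¬ IsPowFactor u (Subword w 1 e))
    (hpf : IsPowFactor u (Subword w s e)) :
    ∃ s', 2 ≤ s' ∧ s' ≤ s ∧ IsPowFactor u (Subword w s' e) ∧
      ¬ IsPowFactor u (Subword w (s' - 1) e) := by
  classical
  have hex : ∃ s', IsPowFactor u (Subword w s' e) := ⟨s, hpf⟩
  have hmin := Nat.find_spec hex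
  have h1 : 2 ≤ Nat.find hex := by
    by_contra! h
    exact hpre (hmin.of_infix (subword_infix_subword (by omega) le_rfl))
  exact ⟨Nat.find hex, h1, Nat.find_le hpf, hmin, Nat.find_min hex (by omega)⟩

theorem exists_run_of_isPowFactor (hγ : 3 ≤ γ) (hw : ¬ UltimatelyPeriodic w) (hu : u ≠ [])
    (hpre : ¬ IsPowFactor u (Subword w 1 (γ * u.length)))
    (hse : s + γ * u.length ≤ e) (hpf : IsPowFactor u (Subword w s e)) :
    ∃ i j, IsRun γ w u i j ∧ i ≤ s + u.length ∧ e ≤ j + u.length := by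
  obtain ⟨e', hee', hpf', hright⟩ := exists_maximal_right hw hu hpf
  obtain ⟨s', hs', hss', hpf'', hleft⟩ := exists_maximal_left
    (fun h => hpre (h.of_infix (subword_infix_subword le_rfl (by omega)))) hpf'
  have hlen : 3 * u.length ≤ γ * u.length := Nat.mul_le_mul_right _ hγ
  have hu0 : 0 < u.length := List.length_pos_iff.2 hu
  refine ⟨s' + u.length, e' - u.length, ⟨by omega, ?_, by omega, ?_, ?_, ?_⟩, by omega, by omega⟩
  · have : (γ - 2) * u.length + 2 * u.length = γ * u.length := by
      rw [← Nat.add_mul, Nat.sub_add_cancel (by omega)]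
    omega
  · rwa [Nat.add_sub_cancel, Nat.sub_add_cancel (by omega)]
  · rwa [Nat.add_sub_cancel, Nat.sub_add_cancel (by omega)]
  · rw [Nat.add_sub_cancel, Nat.sub_add_cancel (by omega)]
    exact fun h => hright (h.of_infix (subword_infix_subword hss' le_rfl))

end Runs

section FracPow

variable {z : List α} {q q' : ℚ}

theorem floor_mul_le_floor_add_one_mul (hq : 0 ≤ q) (n : ℕ) : ⌊q * n⌋₊ ≤ (⌊q⌋₊ + 1) * n := by
  rw [← Nat.cast_le (α := ℚ)]
  push_cast
  calc (⌊q * n⌋₊ : ℚ) ≤ q * n := Nat.floor_le (by positivity)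
    _ ≤ (⌊q⌋₊ + 1) * n := mul_le_mul_of_nonneg_right (Nat.lt_floor_add_one q).le (by positivity)

theorem fracPow_eq_take (hq : 0 ≤ q) {K : ℕ} (hK : ⌊q⌋₊ < K) :
    fracPow z q = ((List.replicate K z).flatten).take ⌊q * z.length⌋₊ := by
  have hlo : ⌊q⌋₊ * z.length ≤ ⌊q * z.length⌋₊ :=
    Nat.le_floor (by push_cast; exact mul_le_mul_of_nonneg_right (Nat.floor_le hq) (by positivity))
  have hhi := add_one_mul ⌊q⌋₊ z.length ▸ floor_mul_le_floor_add_one_mul hq z.length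
  have hA : ((List.replicate ⌊q⌋₊ z).flatten).length = ⌊q⌋₊ * z.length := by simp
  obtain ⟨m, rfl⟩ := Nat.exists_eq_add_of_lt hK
  rw [fracPow, Int.floor_toNat, Int.floor_toNat, Nat.add_assoc, List.replicate_add,
    List.flatten_append, List.replicate_succ, List.flatten_cons, List.take_append, hA,
    List.take_append_of_le_length (l₁ := z) (by omega),
    List.take_of_length_le (l := (List.replicate ⌊q⌋₊ z).flatten) (by omega)]

theorem length_fracPow (z : List α) (hq : 0 ≤ q) : (fracPow z q).length = ⌊q * z.length⌋₊ := by
  rw [fracPow_eq_take hq (Nat.lt_succ_self _), List.length_take, min_eq_left]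
  simpa using floor_mul_le_floor_add_one_mul hq z.length

theorem fracPow_prefix_fracPow (hq : 0 ≤ q) (hqq' : q ≤ q') : fracPow z q <+: fracPow z q' := by
  rw [fracPow_eq_take hq (K := ⌊q'⌋₊ + 1) (Nat.lt_succ_of_le (Nat.floor_mono hqq')),
    fracPow_eq_take (hq.trans hqq') (Nat.lt_succ_self _)]
  exact List.take_prefix_take_left (Nat.floor_mono (by gcongr))

theorem length_fracPow_lt {n : ℕ} (hq : 0 ≤ q) (hqn : q < n) (hz : z ≠ []) :
    (fracPow z q).length < n * z.length := by
  rw [length_fracPow z hq, Nat.floor_lt (by positivity)]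
  push_cast
  exact mul_lt_mul_of_pos_right hqn (by exact_mod_cast List.length_pos_iff.2 hz)

end FracPow

section Factorization

variable {γ : ℕ} {w : ℕ → α} {u : List α} {I J : ℕ → ℕ} {W Z : ℕ → List α} {D : ℕ → ℚ}

theorem IsFactrz.J_add_le_I_succ (hf : IsFactrz γ w u I J W Z D) (hu : u ≠ []) (k : ℕ) :
    J k + u.length + 2 ≤ I (k + 1) := by
  rcases k with _ | k
  · show J 0 + u.length + 2 ≤ I 1
    have := (hf.run 1 le_rfl).2.2.1
    rw [hf.j0]
    omega
  · exact (hf.run (k + 1) (by omega)).add_le_of_lt (hf.run (k + 2) (by omega)) hu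
      (hf.mono _ (by omega))

theorem IsFactrz.length_W (hf : IsFactrz γ w u I J W Z D) (k : ℕ) :
    (W (k + 1)).length = I (k + 1) - 1 - J k := by
  have := (hf.run (k + 1) (by omega)).2.2.1
  rw [hf.wdef (k + 1) (by omega), length_subword, Nat.add_sub_cancel]
  omega

theorem IsFactrz.run_le_or_le (hf : IsFactrz γ w u I J W Z D) (hu : u ≠ []) {i j : ℕ}
    (hr : IsRun γ w u i j) (k : ℕ) : j ≤ J k ∨ I (k + 1) ≤ i := by
  obtain ⟨m, -, rfl, rfl⟩ := hf.complete i j hr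
  clear hr
  rcases le_or_gt m k with hmk | hkm
  · left
    induction k, hmk using Nat.le_induction with
    | base => exact le_rfl
    | succ n hmn ih =>
      have := hf.J_add_le_I_succ hu n
      have := (hf.run (n + 1) (by omega)).1
      omega
  · right
    induction m, hkm using Nat.le_induction with
    | base => exact le_rfl
    | succ n hkn ih => exact ih.trans (hf.mono n (by omega)).le

theorem IsFactrz.append_prefix_subword (hf : IsFactrz γ w u I J W Z D) (hu : u ≠ [])
    {E : ℕ → ℚ} (hE : ∀ k, 1 ≤ k → 0 ≤ E k ∧ E k ≤ D k) (k : ℕ) :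
    W (k + 1) ++ fracPow (Z (k + 1)) (E (k + 1)) <+: Subword w (J k + 1) (J (k + 1)) := by
  have hgap := hf.J_add_le_I_succ hu k
  have hrun := (hf.run (k + 1) (by omega)).1
  rw [← subword_append_subword (b := I (k + 1) - 1) (by omega) (by omega),
    Nat.sub_add_cancel (by omega), hf.zd (k + 1) (by omega), hf.wdef (k + 1) (by omega),
    Nat.add_sub_cancel, List.prefix_append_right_inj]
  obtain ⟨hE0, hED⟩ := hE (k + 1) (by omega)
  exact fracPow_prefix_fracPow hE0 hED

end Factorization

section ReducedWord

variable {γ h : ℕ} {w x : ℕ → α} {u : List α} {I J : ℕ → ℕ} {W Z : ℕ → List α} {D E : ℕ → ℚ}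

theorem length_redPrefix_succ (W Z : ℕ → List α) (E : ℕ → ℚ) (k : ℕ) :
    (redPrefix W Z E (k + 1)).length = (redPrefix W Z E k).length +
      ((W (k + 1)).length + (fracPow (Z (k + 1)) (E (k + 1))).length) := by
  simp [redPrefix]

theorem IsFactrz.subword_reduce (hf : IsFactrz γ w u I J W Z D) (hu : u ≠ [])
    (hE : ∀ k, 1 ≤ k → 0 ≤ E k ∧ E k ≤ D k) (hred : IsReduce W Z E x) {k a b : ℕ} (ha : 1 ≤ a)
    (hb : b ≤ (W (k + 1)).length + (fracPow (Z (k + 1)) (E (k + 1))).length) :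
    Subword x ((redPrefix W Z E k).length + a) ((redPrefix W Z E k).length + b) =
      Subword w (J k + a) (J k + b) := by
  refine subword_congr fun r har hrb => ?_
  obtain ⟨t, ht⟩ := hf.append_prefix_subword hu hE k
  have hsplit : redPrefix W Z E (k + 1) =
      redPrefix W Z E k ++ (W (k + 1) ++ fracPow (Z (k + 1)) (E (k + 1))) := by
    simp [redPrefix]
  have hlen := length_redPrefix_succ W Z E k
  have hx : (redPrefix W Z E (k + 1))[(redPrefix W Z E k).length + (r - 1)]? =
      some (x (1 + ((redPrefix W Z E k).length + (r - 1)))) := by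
    rw [hred (k + 1), List.getElem?_map, List.getElem?_range (by omega), Option.map_some]
  have hw : (redPrefix W Z E (k + 1))[(redPrefix W Z E k).length + (r - 1)]? =
      some (w (J k + 1 + (r - 1))) := by
    have hle := ht ▸ (List.prefix_append _ t).length_le
    rw [List.length_append, length_subword] at hle
    rw [hsplit, List.getElem?_append_right (by omega), Nat.add_sub_cancel_left,
      ← List.getElem?_append_left (l₂ := t) (by rw [List.length_append]; omega), ht,
      getElem?_subword, if_pos (by omega)]
  rw [hw, Option.some_inj, show J k + 1 + (r - 1) = J k + r by omega,
    show 1 + ((redPrefix W Z E k).length + (r - 1)) = (redPrefix W Z E k).length + r by omega] at hx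
  exact hx.symm

theorem IsFactrz.not_isPowFactor_reduce_left (hf : IsFactrz γ w u I J W Z D) (hu : u ≠ [])
    (hE : ∀ k, 1 ≤ k → 0 ≤ E k ∧ E k ≤ D k) (hred : IsReduce W Z E x) (k : ℕ) :
    ¬ IsPowFactor u (Subword x ((redPrefix W Z E k).length + ((W (k + 1)).length - u.length))
      ((redPrefix W Z E k).length + (W (k + 1)).length)) := by
  have hW := hf.length_W k
  have hgap := hf.J_add_le_I_succ hu k
  rw [hf.subword_reduce hu hE hred (by omega) (by omega),
    show J k + ((W (k + 1)).length - u.length) = I (k + 1) - u.length - 1 by omega,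
    show J k + (W (k + 1)).length = I (k + 1) - 1 by omega]
  exact (hf.run (k + 1) (by omega)).not_isPowFactor_left hu

theorem IsFactrz.not_isPowFactor_reduce_right (hf : IsFactrz γ w u I J W Z D) (hu : u ≠ [])
    (hE : ∀ k, 1 ≤ k → 0 ≤ E k ∧ E k ≤ D k) (hred : IsReduce W Z E x) (k : ℕ) :
    ¬ IsPowFactor u (Subword x ((redPrefix W Z E (k + 1)).length + 1)
      ((redPrefix W Z E (k + 1)).length + (u.length + 1))) := by
  have hW := hf.length_W (k + 1)
  have hgap := hf.J_add_le_I_succ hu (k + 1)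
  rw [hf.subword_reduce hu hE hred le_rfl (by omega), ← Nat.add_assoc]
  exact (hf.run (k + 1) (by omega)).not_isPowFactor_right hu

theorem IsFactrz.not_isPowFactor_reduce_inside (hf : IsFactrz γ w u I J W Z D) (hγ : 3 ≤ γ)
    (hw : ¬ UltimatelyPeriodic w) (hu : u ≠ [])
    (hpre : ¬ IsPowFactor u (Subword w 1 (γ * u.length)))
    (hE : ∀ k, 1 ≤ k → 0 ≤ E k ∧ E k ≤ D k) (hred : IsReduce W Z E x) {k a b : ℕ} (ha : 1 ≤ a)
    (haW : a + u.length ≤ (W (k + 1)).length) (hab : a + γ * u.length ≤ b)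
    (hb : b ≤ (W (k + 1)).length + (fracPow (Z (k + 1)) (E (k + 1))).length) :
    ¬ IsPowFactor u
      (Subword x ((redPrefix W Z E k).length + a) ((redPrefix W Z E k).length + b)) := by
  rw [hf.subword_reduce hu hE hred ha hb]
  intro hpf
  obtain ⟨i, j, hr, hi, hj⟩ := exists_run_of_isPowFactor hγ hw hu hpre (by omega) hpf
  have hW := hf.length_W k
  have hgap := hf.J_add_le_I_succ hu k
  have hγu : u.length ≤ γ * u.length := Nat.le_mul_of_pos_left _ (by omega)
  rcases hf.run_le_or_le hu hr k with hjk | hki <;> omega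

theorem IsFactrz.strictMono_length_redPrefix (hf : IsFactrz γ w u I J W Z D) (hu : u ≠ [])
    (E : ℕ → ℚ) : StrictMono fun k => (redPrefix W Z E k).length :=
  strictMono_nat_of_lt_succ fun k => by
    have := hf.J_add_le_I_succ hu k
    have := hf.length_W k
    simp only [length_redPrefix_succ]
    omega

theorem IsFactrz.not_isPowFactor_reduce (hf : IsFactrz γ w u I J W Z D) (hγ : 3 ≤ γ)
    (hh : γ ≤ h) (hw : ¬ UltimatelyPeriodic w) (hu : u ≠ [])
    (hpre : ¬ IsPowFactor u (Subword w 1 (γ * u.length)))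
    (hE : ∀ k, 1 ≤ k → 0 ≤ E k ∧ E k ≤ D k) (hEh : ∀ k, 1 ≤ k → E k < h)
    (hred : IsReduce W Z E x) {i : ℕ} (hi : 1 ≤ i) :
    ¬ IsPowFactor u (Subword x i (i + (h + 2) * u.length - 1)) := by
  intro hpf
  have hmono := hf.strictMono_length_redPrefix hu E
  obtain ⟨k, hki, hik⟩ := hmono.exists_between_of_tendsto_atTop hmono.tendsto_atTop
    (show (redPrefix W Z E 0).length < i from hi)
  have hW := hf.length_W k
  have hgap := hf.J_add_le_I_succ hu k
  have hP := length_redPrefix_succ W Z E k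
  have hu0 : 0 < u.length := List.length_pos_iff.2 hu
  have hB : (fracPow (Z (k + 1)) (E (k + 1))).length < h * u.length := by
    have hZ := hf.zlen (k + 1) (by omega)
    rw [← hZ]
    exact length_fracPow_lt (hE (k + 1) (by omega)).1 (hEh (k + 1) (by omega))
      (List.ne_nil_of_length_pos (by omega))
  have hγh : γ * u.length ≤ h * u.length := Nat.mul_le_mul_right _ hh
  have hN : (h + 2) * u.length = h * u.length + 2 * u.length := by ring
  generalize (h + 2) * u.length = N at hN hpf
  by_cases he : i + N - 1 ≤ (redPrefix W Z E (k + 1)).length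
  · by_cases hiW : i + u.length ≤ (redPrefix W Z E k).length + (W (k + 1)).length
    · refine hf.not_isPowFactor_reduce_inside hγ hw hu hpre hE hred (k := k)
        (a := i - (redPrefix W Z E k).length)
        (b := i + N - 1 - (redPrefix W Z E k).length)
        (by omega) (by omega) (by omega) (by omega) ?_
      rwa [Nat.add_sub_cancel' hki.le, Nat.add_sub_cancel' (by omega)]
    -- the factor would fit in the last `|u| + |(Z (k+1))^(E (k+1))|` letters of the segment
    · omega
  · by_cases he' : (redPrefix W Z E (k + 1)).length + (u.length + 1) ≤ i + N - 1
    · exact hf.not_isPowFactor_reduce_right hu hE hred k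
        (hpf.of_infix (subword_infix_subword (by omega) he'))
    · exact hf.not_isPowFactor_reduce_left hu hE hred k
        (hpf.of_infix (subword_infix_subword (by omega) (by omega)))

end ReducedWord

/-- the reduced word contains no `(h+2)`-power of any conjugate of `u`
or of `u.reverse`. -/
theorem reduced_word_power_free {α : Type*} (γ h : ℕ) (hγ : 3 ≤ γ) (hh : γ ≤ h)
    (w : ℕ → α) (u : List α) (hw : ¬ UltimatelyPeriodic w) (hu : InPi γ w u)
    (φ : ℚ → ℚ) (hφ : InPhi γ h φ)
    (I J : ℕ → ℕ) (W Z : ℕ → List α) (D : ℕ → ℚ)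
    (hf : IsFactrz γ w u I J W Z D)
    (xb : ℕ → α) (hred : IsReduce W Z (fun k => φ (D k)) xb) :
    ∀ t : List α, t.length = u.length → IsPowFactor u t →
      ¬ IsFactorI xb ((List.replicate (h + 2) t).flatten) := by
  rintro t ht htu ⟨i, hi, hocc⟩
  have hu0 : u ≠ [] := hu.1.1
  have hpre : ¬ IsPowFactor u (Subword w 1 (γ * u.length)) := by
    rw [← Nat.add_sub_cancel_left (n := 1) (m := γ * u.length), ← map_range_eq_subword le_rfl]
    exact hu.2.2.1
  have hE : ∀ k, 1 ≤ k → 0 ≤ φ (D k) ∧ φ (D k) ≤ D k := fun k hk => by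
    obtain ⟨hlo, -, n, hn⟩ := hφ (D k) (hf.dge k hk)
    have : (3 : ℚ) ≤ γ := by exact_mod_cast hγ
    exact ⟨by linarith, by linarith [n.cast_nonneg (α := ℚ)]⟩
  refine hf.not_isPowFactor_reduce hγ hh hw hu0 hpre hE
    (fun k hk => (hφ (D k) (hf.dge k hk)).2.1) hred hi ?_
  rw [← ht, ← length_flatten_replicate, ← map_range_eq_subword hi, ← hocc]
  exact htu.flatten_replicate ht hu0 (h + 2)
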